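/- arXiv:1703.06654 — 3 statements merged into one kernel-verified Lean document; each statement's English description precedes it below -/
import Mathlib

section
/- For any large x and any integer 0 ≤ k ≤ log log x − 5, the number of integers d ≤ x all of whose prime factors lie in the interval (x^{e^{−(k+1)}}, x^{e^{−k}}] is at most C · 2^{−e^k} · x / log x for an absolute constant C. -/
/-!
Put `y = x^{e^{-(k+1)}}`, `z = x^{e^{-k}}` and `s = e^k`. At most `√x` integers lie below `√x`.
An integer `√x < d ≤ x` with all prime factors in `[y, z]` has more than `s/2` prime factors,
so `d = p e` with `p ≥ y` prime, `p ≤ x/e` and `Ω(e) ≥ s/2 - 1`; Chebyshev's bound on the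
primes `p` leaves `x log 4 / log y · ∑ 1/e`. Rankin's trick inserts the factor
`5^{Ω(e) - (s/2 - 1)} ≥ 1`, and the Euler product bounds `∑ 5^{Ω(e)}/e` by
`∏_{y ≤ p ≤ z} (1 - 5/p)⁻¹ ≤ exp (10 ∑ 1/p)`, which is `O(1)` because `log z = e log y`.
As `√5 > 2`, the factor `5^{-s/2}` beats `2^{-s}` by enough to absorb the factor `e s`
in `1/log y = e s / log x`.
-/

open scoped Classical

open Real Finset
open scoped ArithmeticFunction.Omega

noncomputable def primesBetween (y z : ℝ) : Finset ℕ :=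
  {p ∈ Iic ⌊z⌋₊ | p.Prime ∧ y ≤ p}

theorem mem_primesBetween {y z : ℝ} {p : ℕ} :
    p ∈ primesBetween y z ↔ p.Prime ∧ y ≤ p ∧ (p : ℝ) ≤ z := by
  simp only [primesBetween, mem_filter, mem_Iic]
  constructor
  · rintro ⟨hpz, hp, hyp⟩
    exact ⟨hp, hyp, (Nat.le_floor_iff' hp.ne_zero).mp hpz⟩
  · rintro ⟨hp, hyp, hpz⟩
    exact ⟨(Nat.le_floor_iff' hp.ne_zero).mpr hpz, hp, hyp⟩

theorem card_primesBetween_mul_log_le {y z : ℝ} (hy : 0 < y) (hz : 0 ≤ z) :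
    #(primesBetween y z) * log y ≤ log 4 * z := calc
  #(primesBetween y z) * log y = ∑ p ∈ primesBetween y z, log y := by
    rw [sum_const, nsmul_eq_mul]
  _ ≤ ∑ p ∈ primesBetween y z, log p :=
    sum_le_sum fun p hp => log_le_log hy (mem_primesBetween.mp hp).2.1
  _ ≤ ∑ p ∈ ⌊z⌋₊.primesLE, log p := by
    refine sum_le_sum_of_subset_of_nonneg (fun p hp => ?_) fun p _ _ => log_natCast_nonneg p
    simp only [primesBetween, mem_filter, mem_Iic] at hp
    exact Nat.mem_primesLE.mpr ⟨hp.1, hp.2.1⟩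
  _ = Chebyshev.theta z := (Chebyshev.theta_eq_sum_primesLE z).symm
  _ ≤ log 4 * z := Chebyshev.theta_le_log4_mul_x hz

theorem card_primesBetween_le {y z : ℝ} (hy : 1 < y) (hz : 0 ≤ z) :
    (#(primesBetween y z) : ℝ) ≤ log 4 * z / log y := by
  rw [le_div_iff₀ (log_pos hy)]
  exact card_primesBetween_mul_log_le (by linarith) hz

theorem sum_inv_le_of_two_pow_le_of_lt_two_pow {P : Finset ℕ} {a b : ℕ} (ha : 1 ≤ a)
    (hP : ∀ p ∈ P, p.Prime ∧ 2 ^ a ≤ p ∧ p < 2 ^ b) :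
    ∑ p ∈ P, (p : ℝ)⁻¹ ≤ 4 * (b - a : ℕ) / a := by
  have hlog : ∀ p ∈ P, Nat.log 2 p ∈ Ico a b := fun p hp => by
    obtain ⟨hp, hap, hpb⟩ := hP p hp
    exact mem_Ico.mpr
      ⟨Nat.le_log_of_pow_le one_lt_two hap, Nat.log_lt_of_lt_pow hp.ne_zero hpb⟩
  have hfiber : ∀ j ∈ Ico a b, ∑ p ∈ P with Nat.log 2 p = j, (p : ℝ)⁻¹ ≤ 4 / a := by
    intro j hj
    have haj : a ≤ j := (mem_Ico.mp hj).1
    have hj : (0 : ℝ) < j := Nat.cast_pos.mpr (ha.trans haj)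
    have hsub : {p ∈ P | Nat.log 2 p = j} ⊆ primesBetween (2 ^ j) (2 ^ (j + 1)) :=
        fun p hp => by
      obtain ⟨hpP, rfl⟩ := mem_filter.mp hp
      have hp := (hP p hpP).1
      refine mem_primesBetween.mpr ⟨hp, ?_, ?_⟩
      · exact_mod_cast Nat.pow_log_le_self 2 hp.ne_zero
      · exact_mod_cast (Nat.lt_pow_succ_log_self one_lt_two p).le
    have hcard := card_primesBetween_mul_log_le (y := 2 ^ j) (z := 2 ^ (j + 1)) (by positivity)
      (by positivity)
    rw [Real.log_pow, show (4 : ℝ) = 2 ^ 2 by norm_num, Real.log_pow] at hcard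
    calc ∑ p ∈ P with Nat.log 2 p = j, (p : ℝ)⁻¹
        ≤ ∑ p ∈ P with Nat.log 2 p = j, ((2 : ℝ) ^ j)⁻¹ := sum_le_sum fun p hp =>
          inv_anti₀ (by positivity) (mem_primesBetween.mp (hsub hp)).2.1
      _ ≤ #(primesBetween (2 ^ j) (2 ^ (j + 1))) * ((2 : ℝ) ^ j)⁻¹ := by
          rw [sum_const, nsmul_eq_mul]
          gcongr
      _ ≤ 4 / j := by
          rw [← div_eq_mul_inv, div_le_div_iff₀ (by positivity) hj]
          refine le_of_mul_le_mul_right ?_ (log_pos one_lt_two)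
          generalize (#(primesBetween (2 ^ j) (2 ^ (j + 1))) : ℝ) = c at hcard ⊢
          push_cast at hcard
          rw [pow_succ] at hcard
          linarith
      _ ≤ 4 / a :=
          div_le_div_of_nonneg_left (by norm_num) (Nat.cast_pos.mpr ha) (by exact_mod_cast haj)
  calc ∑ p ∈ P, (p : ℝ)⁻¹
        = ∑ j ∈ Ico a b, ∑ p ∈ P with Nat.log 2 p = j, (p : ℝ)⁻¹ :=
          (sum_fiberwise_of_maps_to hlog _).symm
    _ ≤ ∑ j ∈ Ico a b, (4 / a : ℝ) := sum_le_sum hfiber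
    _ = 4 * (b - a : ℕ) / a := by rw [sum_const, Nat.card_Ico, nsmul_eq_mul]; ring

theorem sum_inv_primesBetween_le {y z : ℝ} (hy : 2 < y) (hyz : y ≤ z) :
    ∑ p ∈ primesBetween y z, (p : ℝ)⁻¹ ≤
      4 * (logb 2 z - logb 2 y + 2) / (logb 2 y - 1) := by
  have hy1 : 1 < logb 2 y := by
    rw [← logb_self_eq_one one_lt_two]; exact logb_lt_logb one_lt_two two_pos hy
  have hyz' : logb 2 y ≤ logb 2 z := logb_le_logb_of_le one_lt_two (by linarith) hyz
  set a := ⌊logb 2 y⌋₊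
  set b := ⌊logb 2 z⌋₊ + 1
  have ha : 1 ≤ a := Nat.le_floor (by exact_mod_cast hy1.le)
  have hab : a ≤ b := (Nat.floor_le_floor hyz').trans (Nat.le_succ _)
  have hay : (2 : ℝ) ^ a ≤ y := by
    rw [← rpow_natCast]
    calc (2 : ℝ) ^ (a : ℝ) ≤ 2 ^ logb 2 y :=
          rpow_le_rpow_of_exponent_le one_le_two (Nat.floor_le (by linarith))
      _ = y := rpow_logb two_pos (by norm_num) (by linarith)
  have hzb : z < (2 : ℝ) ^ b := by
    rw [← rpow_natCast]
    calc z = 2 ^ logb 2 z := (rpow_logb two_pos (by norm_num) (by linarith)).symm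
      _ < 2 ^ (b : ℝ) :=
          rpow_lt_rpow_of_exponent_lt one_lt_two (by push_cast [b]; exact Nat.lt_floor_add_one _)
  have hP : ∀ p ∈ primesBetween y z, p.Prime ∧ 2 ^ a ≤ p ∧ p < 2 ^ b := fun p hp => by
    obtain ⟨hp, hyp, hpz⟩ := mem_primesBetween.mp hp
    exact ⟨hp, by exact_mod_cast hay.trans hyp, by exact_mod_cast hpz.trans_lt hzb⟩
  refine (sum_inv_le_of_two_pow_le_of_lt_two_pow ha hP).trans ?_
  rw [Nat.cast_sub hab, mul_div_assoc, mul_div_assoc]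
  gcongr 4 * ?_
  have hya := Nat.lt_floor_add_one (logb 2 y)
  have hbz := Nat.floor_le (show 0 ≤ logb 2 z by linarith)
  apply div_le_div₀ (by linarith) _ (by linarith) (by linarith)
  push_cast [b]
  linarith

theorem sum_inv_primesBetween_rpow_exp_one_le {y : ℝ} (hy₀ : 0 < y) (hy : 16 ≤ log y) :
    ∑ p ∈ primesBetween y (y ^ exp 1), (p : ℝ)⁻¹ ≤ 8 := by
  have hy2 : 2 < y := by
    by_contra! h
    linarith [log_le_log hy₀ h, log_two_lt_d9]
  have hb : log y ≤ logb 2 y := by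
    rw [logb, le_div_iff₀ (log_pos one_lt_two)]
    nlinarith [log_two_lt_d9]
  refine (sum_inv_primesBetween_le hy2
    (self_le_rpow_of_one_le (by linarith) (by linarith [add_one_le_exp 1]))).trans ?_
  rw [logb_rpow_eq_mul_logb_of_pos hy₀, div_le_iff₀ (by linarith)]
  nlinarith [exp_one_lt_d9]

-- The restriction to `s`-factored numbers gives `‖f p‖ < 1` at every prime, as the Euler
-- product needs, even when `t` exceeds small primes outside `s`.
noncomputable def cardFactorsWeight (s : Finset ℕ) (t : ℝ) : ℕ →* ℝ where
  toFun := (Nat.factoredNumbers s).indicator fun n => t ^ Ω n / n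
  map_one' := by
    rw [Set.indicator_of_mem (Nat.mem_factoredNumbers.mpr ⟨one_ne_zero, by simp⟩)]
    simp
  map_mul' m n := by
    by_cases hmn : m ∈ Nat.factoredNumbers s ∧ n ∈ Nat.factoredNumbers s
    · obtain ⟨hm, hn⟩ := hmn
      rw [Set.indicator_of_mem hm, Set.indicator_of_mem hn,
        Set.indicator_of_mem (Nat.mul_mem_factoredNumbers hm hn),
        ArithmeticFunction.cardFactors_mul (Nat.ne_zero_of_mem_factoredNumbers hm)
          (Nat.ne_zero_of_mem_factoredNumbers hn), pow_add, Nat.cast_mul, mul_div_mul_comm]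
    · have hmn' : m * n ∉ Nat.factoredNumbers s := fun h =>
        hmn ⟨Nat.mem_factoredNumbers_of_dvd h (dvd_mul_right m n),
          Nat.mem_factoredNumbers_of_dvd h (dvd_mul_left n m)⟩
      rw [Set.indicator_of_notMem hmn']
      rcases not_and_or.mp hmn with h | h <;> simp [Set.indicator_of_notMem h]

theorem cardFactorsWeight_apply (s : Finset ℕ) (t : ℝ) (n : ℕ) :
    cardFactorsWeight s t n = (Nat.factoredNumbers s).indicator (fun n => t ^ Ω n / n) n :=
  rfl

theorem cardFactorsWeight_of_mem {s : Finset ℕ} {t : ℝ} {n : ℕ}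
    (hn : n ∈ Nat.factoredNumbers s) : cardFactorsWeight s t n = t ^ Ω n / n := by
  rw [cardFactorsWeight_apply, Set.indicator_of_mem hn]

theorem Nat.Prime.mem_factoredNumbers_iff {s : Finset ℕ} {p : ℕ} (hp : p.Prime) :
    p ∈ Nat.factoredNumbers s ↔ p ∈ s := by
  simp [Nat.mem_factoredNumbers, Nat.primeFactorsList_prime hp, hp.ne_zero]

theorem sum_pow_cardFactors_div_le_prod {s A : Finset ℕ} {t : ℝ} (ht : 0 ≤ t)
    (hs : ∀ p ∈ s, p.Prime → t < p) (hA : ∀ a ∈ A, a ∈ Nat.factoredNumbers s) :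
    ∑ a ∈ A, t ^ Ω a / a ≤ ∏ p ∈ s with p.Prime, (1 - t / p)⁻¹ := by
  set w := cardFactorsWeight s t
  have hw : ∀ {p : ℕ}, p.Prime → ‖w p‖ < 1 := fun {p} hp => by
    by_cases hps : p ∈ s
    · rw [cardFactorsWeight_of_mem (hp.mem_factoredNumbers_iff.mpr hps),
        ArithmeticFunction.cardFactors_apply_prime hp, pow_one,
        Real.norm_of_nonneg (by positivity), div_lt_one (by exact_mod_cast hp.pos)]
      exact hs p hps hp
    · rw [cardFactorsWeight_apply,
        Set.indicator_of_notMem (mt hp.mem_factoredNumbers_iff.mp hps), norm_zero]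
      exact one_pos
  have hsum := (EulerProduct.summable_and_hasSum_factoredNumbers_prod_filter_prime_geometric
    hw s).2
  have hprod :
      ∏ p ∈ s with p.Prime, (1 - w p)⁻¹ = ∏ p ∈ s with p.Prime, (1 - t / p)⁻¹ :=
    prod_congr rfl fun p hp => by
      obtain ⟨hps, hp⟩ := mem_filter.mp hp
      rw [cardFactorsWeight_of_mem (hp.mem_factoredNumbers_iff.mpr hps),
        ArithmeticFunction.cardFactors_apply_prime hp, pow_one]
  calc ∑ a ∈ A, t ^ Ω a / a = ∑ a ∈ A.subtype (· ∈ Nat.factoredNumbers s), w a := by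
        rw [sum_subtype_of_mem (fun a => w a) hA]
        exact sum_congr rfl fun a ha => (cardFactorsWeight_of_mem (hA a ha)).symm
    _ ≤ ∏ p ∈ s with p.Prime, (1 - t / p)⁻¹ :=
        hprod ▸ sum_le_hasSum _ (fun n _ => by
          rw [cardFactorsWeight_apply]
          exact Set.indicator_nonneg (fun _ _ => by positivity) _) hsum

theorem sum_inv_le_rpow_neg_mul_prod {s A : Finset ℕ} {t m : ℝ} (ht : 1 ≤ t)
    (hs : ∀ p ∈ s, p.Prime → t < p)
    (hA : ∀ a ∈ A, a ∈ Nat.factoredNumbers s ∧ m ≤ Ω a) :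
    ∑ a ∈ A, (a : ℝ)⁻¹ ≤ t ^ (-m) * ∏ p ∈ s with p.Prime, (1 - t / p)⁻¹ := calc
  ∑ a ∈ A, (a : ℝ)⁻¹ ≤ ∑ a ∈ A, t ^ (-m) * (t ^ Ω a / a) := by
    refine sum_le_sum fun a ha => ?_
    rw [← mul_div_assoc, ← rpow_natCast, ← rpow_add (by linarith), div_eq_mul_inv]
    exact le_mul_of_one_le_left (by positivity) (one_le_rpow ht (by linarith [(hA a ha).2]))
  _ = t ^ (-m) * ∑ a ∈ A, t ^ Ω a / a := (mul_sum _ _ _).symm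
  _ ≤ t ^ (-m) * ∏ p ∈ s with p.Prime, (1 - t / p)⁻¹ := by
    gcongr
    exact sum_pow_cardFactors_div_le_prod (by linarith) hs fun a ha => (hA a ha).1

theorem inv_one_sub_le_exp_two_mul {u : ℝ} (hu₀ : 0 ≤ u) (hu : u ≤ 1 / 2) :
    (1 - u)⁻¹ ≤ exp (2 * u) := calc
  (1 - u)⁻¹ ≤ 1 + 2 * u := by
    rw [inv_le_iff_one_le_mul₀ (by linarith)]
    nlinarith
  _ ≤ exp (2 * u) := by linarith [add_one_le_exp (2 * u)]

theorem prod_inv_one_sub_div_le_exp {s : Finset ℕ} {t : ℝ} (ht : 0 < t)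
    (hs : ∀ p ∈ s, 2 * t ≤ p) :
    ∏ p ∈ s, (1 - t / p)⁻¹ ≤ exp (2 * t * ∑ p ∈ s, (p : ℝ)⁻¹) := by
  rw [mul_sum, exp_sum]
  refine prod_le_prod (fun p hp => ?_) fun p hp => ?_
  all_goals have hp0 : 0 < (p : ℝ) := by linarith [hs p hp]
  all_goals have htp : t / p ≤ 1 / 2 := by rw [div_le_iff₀ hp0]; linarith [hs p hp]
  · exact inv_nonneg.mpr (by linarith)
  · rw [← div_eq_mul_inv, mul_div_assoc]
    exact inv_one_sub_le_exp_two_mul (by positivity) htp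

noncomputable def bandNumbers (x y z : ℝ) : Finset ℕ :=
  {d ∈ Icc 1 ⌊x⌋₊ | ∀ p : ℕ, p.Prime → p ∣ d → y ≤ p ∧ p ≤ z}

theorem natCast_le_pow_cardFactors {d : ℕ} {z : ℝ} (hd : d ≠ 0) (hz : 0 ≤ z)
    (h : ∀ p : ℕ, p.Prime → p ∣ d → (p : ℝ) ≤ z) : (d : ℝ) ≤ z ^ Ω d := by
  have hfloor : d ≤ ⌊z⌋₊ ^ Ω d := by
    conv_lhs => rw [← Nat.prod_primeFactorsList hd]
    rw [ArithmeticFunction.cardFactors_apply]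
    exact List.prod_le_pow_card _ _ fun q hq =>
      Nat.le_floor <|
        h q (Nat.prime_of_mem_primeFactorsList hq) (Nat.dvd_of_mem_primeFactorsList hq)
  calc (d : ℝ) ≤ (⌊z⌋₊ : ℝ) ^ Ω d := by exact_mod_cast hfloor
    _ ≤ z ^ Ω d := by gcongr; exact Nat.floor_le hz

theorem log_div_two_mul_log_lt_cardFactors {x z : ℝ} {d : ℕ} (hx : 0 < x) (hz : 1 < z)
    (hdz : ∀ p : ℕ, p.Prime → p ∣ d → (p : ℝ) ≤ z) (hd : √x < d) :
    log x / (2 * log z) < Ω d := by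
  have hd0 : d ≠ 0 := by rintro rfl; simp at hd; linarith [sqrt_nonneg x]
  have := log_lt_log (sqrt_pos.mpr hx)
    (hd.trans_le (natCast_le_pow_cardFactors hd0 (by linarith) hdz))
  rw [log_sqrt hx.le, log_pow] at this
  rw [div_lt_iff₀ (by linarith [log_pos hz])]
  linarith

theorem card_filter_sqrt_lt_le_sum {x y z : ℝ} (hx : 1 ≤ x) (hz : 1 < z) :
    #((bandNumbers x y z).filter fun d : ℕ => √x < d) ≤ ∑ e ∈ Icc 1 ⌊x⌋₊ with
      e ∈ Nat.factoredNumbers (primesBetween y z) ∧ log x / (2 * log z) - 1 ≤ Ω e,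
      #(primesBetween y (x / e)) := by
  refine (card_le_card (t := Finset.biUnion _ fun e : ℕ =>
    (primesBetween y (x / e)).image (· * e)) ?_).trans
    (card_biUnion_le.trans (sum_le_sum fun e _ => card_image_le))
  intro d hd
  simp only [bandNumbers, mem_filter, mem_Icc] at hd
  obtain ⟨⟨⟨hd1, hdx⟩, hband⟩, hsqrt⟩ := hd
  have hd1' : d ≠ 1 := by
    rintro rfl
    have : 1 ≤ √x := one_le_sqrt.mpr hx
    norm_num at hsqrt
    linarith
  set p := d.minFac
  have hp : p.Prime := Nat.minFac_prime hd1'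
  have hpd : p ∣ d := Nat.minFac_dvd d
  set e := d / p
  have hed : e * p = d := Nat.div_mul_cancel hpd
  have he0 : e ≠ 0 := by rintro h; rw [h, zero_mul] at hed; omega
  have hΩ := log_div_two_mul_log_lt_cardFactors (by linarith) hz
    (fun q hq hqd => (hband q hq hqd).2) hsqrt
  have hΩe : Ω d = Ω e + 1 := by
    rw [← hed, ArithmeticFunction.cardFactors_mul he0 hp.ne_zero,
      ArithmeticFunction.cardFactors_apply_prime hp]
  have hdx' : (d : ℝ) ≤ x := (Nat.cast_le.mpr hdx).trans (Nat.floor_le (by linarith))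
  refine mem_biUnion.mpr ⟨e, ?_, mem_image.mpr ⟨p, ?_, by rw [mul_comm]; exact hed⟩⟩
  · refine mem_filter.mpr ⟨mem_Icc.mpr ⟨Nat.one_le_iff_ne_zero.mpr he0,
      (Nat.div_le_self d p).trans hdx⟩, Nat.mem_factoredNumbers'.mpr fun q hq hqe => ?_, ?_⟩
    · have hqd : q ∣ d := hqe.trans ⟨p, hed.symm⟩
      exact mem_primesBetween.mpr ⟨hq, hband q hq hqd⟩
    · rw [hΩe] at hΩ
      push_cast at hΩ
      linarith
  · refine mem_primesBetween.mpr ⟨hp, (hband p hp hpd).1, ?_⟩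
    rw [le_div_iff₀ (by positivity)]
    rwa [← hed, Nat.cast_mul, mul_comm] at hdx'

theorem card_bandNumbers_le {x y z : ℝ} (hx : 1 ≤ x) (hy : 10 ≤ y) (hz : 1 < z) :
    (#(bandNumbers x y z) : ℝ) ≤ √x + log 4 * x / log y * 5 ^ (1 - log x / (2 * log z)) *
      exp (10 * ∑ p ∈ primesBetween y z, (p : ℝ)⁻¹) := by
  set E := {e ∈ Icc 1 ⌊x⌋₊ |
    e ∈ Nat.factoredNumbers (primesBetween y z) ∧ log x / (2 * log z) - 1 ≤ Ω e}
  have hsmall : (#((bandNumbers x y z).filter fun d : ℕ => ¬ √x < d) : ℝ) ≤ √x := by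
    have hsub : ((bandNumbers x y z).filter fun d : ℕ => ¬ √x < d) ⊆ Icc 1 ⌊√x⌋₊ :=
        fun d hd => by
      simp only [bandNumbers, mem_filter, mem_Icc, not_lt] at hd ⊢
      exact ⟨hd.1.1.1, Nat.le_floor hd.2⟩
    calc (#((bandNumbers x y z).filter fun d : ℕ => ¬ √x < d) : ℝ)
          ≤ #(Icc 1 ⌊√x⌋₊) := by exact_mod_cast card_le_card hsub
      _ ≤ √x := by simpa using Nat.floor_le (sqrt_nonneg x)
  have hlarge : (#((bandNumbers x y z).filter fun d : ℕ => √x < d) : ℝ) ≤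
      log 4 * x / log y * ∑ e ∈ E, (e : ℝ)⁻¹ := calc
    _ ≤ ∑ e ∈ E, (#(primesBetween y (x / e)) : ℝ) := by
        exact_mod_cast card_filter_sqrt_lt_le_sum hx hz
    _ ≤ ∑ e ∈ E, log 4 * (x / e) / log y :=
        sum_le_sum fun e _ => card_primesBetween_le (by linarith) (by positivity)
    _ = log 4 * x / log y * ∑ e ∈ E, (e : ℝ)⁻¹ := by
        rw [mul_sum]
        exact sum_congr rfl fun e _ => by ring
  have hrankin : ∑ e ∈ E, (e : ℝ)⁻¹ ≤
      5 ^ (1 - log x / (2 * log z)) * exp (10 * ∑ p ∈ primesBetween y z, (p : ℝ)⁻¹) := calc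
    _ ≤ (5 : ℝ) ^ (-(log x / (2 * log z) - 1)) *
        ∏ p ∈ primesBetween y z with p.Prime, (1 - 5 / (p : ℝ))⁻¹ :=
      sum_inv_le_rpow_neg_mul_prod (by norm_num)
        (fun p hp _ => by linarith [(mem_primesBetween.mp hp).2.1])
        fun e he => (mem_filter.mp he).2
    _ ≤ (5 : ℝ) ^ (1 - log x / (2 * log z)) *
          exp (10 * ∑ p ∈ primesBetween y z, (p : ℝ)⁻¹) := by
      have hprod := prod_inv_one_sub_div_le_exp (s := primesBetween y z) (t := 5) (by norm_num)
        fun p hp => by linarith [(mem_primesBetween.mp hp).2.1]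
      rw [show (2 : ℝ) * 5 = 10 by norm_num] at hprod
      rw [neg_sub, filter_true_of_mem fun p hp => (mem_primesBetween.mp hp).1]
      gcongr
  rw [← card_filter_add_card_filter_not (s := bandNumbers x y z) (p := fun d : ℕ => √x < d),
    Nat.cast_add]
  have : 0 ≤ log 4 * x / log y := div_nonneg (by positivity) (log_nonneg (by linarith))
  linarith [mul_le_mul_of_nonneg_left hrankin this]

theorem two_pow_le_exp (n : ℕ) : (2 : ℝ) ^ n ≤ exp n := by
  rw [← exp_one_pow]
  gcongr
  linarith [add_one_le_exp 1]

theorem sqrt_le_two_rpow_neg_mul_div_log {x s : ℝ} (hx₀ : 0 < x) (hx : 24 ≤ log x)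
    (hs : 8 * s ≤ log x) : √x ≤ 2 ^ (-s) * x / log x := by
  set L := log x
  have hexp : ∀ c : ℝ, x ^ c = exp (c * L) := fun c => by rw [rpow_def_of_pos hx₀, mul_comm]
  have h2s : (2 : ℝ) ^ s ≤ exp (L / 8) := by
    rw [rpow_def_of_pos two_pos]
    gcongr
    rcases le_or_gt 0 s with h | h
    · nlinarith [log_two_lt_d9]
    · nlinarith [log_pos one_lt_two]
  have hL : L ≤ 4 * exp (L / 4) := by
    have := log_le_rpow_div hx₀.le (ε := 1 / 4) (by norm_num)
    rw [hexp, show 1 / 4 * L = L / 4 by ring] at this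
    linarith
  have h4 : 4 ≤ exp (L / 8) := by linarith [add_one_le_exp (L / 8)]
  have hsqrt : √x = exp (L / 2) := by rw [sqrt_eq_rpow, hexp]; ring_nf
  have hL' : L ≤ exp (L / 8) * exp (L / 4) := by nlinarith [exp_pos (L / 4)]
  have key : √x * (2 ^ s * L) ≤ x := calc
    √x * (2 ^ s * L) ≤ exp (L / 2) * (exp (L / 8) * (exp (L / 8) * exp (L / 4))) := by
      rw [hsqrt]
      gcongr
    _ = exp L := by
      rw [← exp_add, ← exp_add, ← exp_add]
      ring_nf
    _ = x := exp_log hx₀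
  rw [rpow_neg zero_le_two, le_div_iff₀ (by linarith), inv_mul_eq_div,
    le_div_iff₀ (by positivity)]
  linarith

theorem mul_five_rpow_neg_half_le {s : ℝ} (hs : 0 ≤ s) :
    s * 5 ^ (-(s / 2)) ≤ 10 * 2 ^ (-s) := by
  have hlog : log 2 + 1 / 10 ≤ log 5 / 2 := by
    have := one_sub_inv_le_log_of_pos (x := 5 / 4) (by norm_num)
    rw [log_div (by norm_num) (by norm_num), show (4 : ℝ) = 2 ^ 2 by norm_num, log_pow] at this
    norm_num at this
    linarith
  calc s * 5 ^ (-(s / 2)) = s * exp (log 5 * -(s / 2)) := by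
        rw [rpow_def_of_pos (by norm_num)]
    _ ≤ s * exp (log 2 * -s + -(s / 10)) := by gcongr; nlinarith
    _ = s * exp (-(s / 10)) * 2 ^ (-s) := by rw [exp_add, rpow_def_of_pos two_pos]; ring
    _ ≤ 10 * 2 ^ (-s) := by
      gcongr
      rw [exp_neg, ← div_eq_mul_inv, div_le_iff₀ (exp_pos _)]
      linarith [add_one_le_exp (s / 10)]

theorem card_bandNumbers_rpow_inv_le {x s : ℝ} (hx : 1 < x) (hs : 1 ≤ s)
    (hsx : exp 5 * s ≤ log x) :
    (#(bandNumbers x (x ^ (s * exp 1)⁻¹) (x ^ s⁻¹)) : ℝ) ≤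
      (1 + 300 * exp 80) * 2 ^ (-s) * x / log x := by
  set y := x ^ (s * exp 1)⁻¹
  have hL : 0 < log x := log_pos hx
  have he4 := two_pow_le_exp 4
  have he5 := two_pow_le_exp 5
  norm_num at he4 he5
  have hy : log y = log x / (s * exp 1) := by rw [log_rpow (by linarith), inv_mul_eq_div]
  have hy16 : 16 ≤ log y := by
    rw [hy, le_div_iff₀ (by positivity)]
    rw [show (5 : ℝ) = 4 + 1 by norm_num, exp_add] at hsx
    nlinarith [mul_le_mul_of_nonneg_right he4 (by positivity : 0 ≤ exp 1 * s)]
  have hy0 : 0 < y := rpow_pos_of_pos (by linarith) _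
  have hy10 : 10 ≤ y := by
    by_contra! h
    linarith [log_le_log hy0 h.le, log_le_sub_one_of_pos (by norm_num : (0 : ℝ) < 10)]
  have hz : x ^ s⁻¹ = y ^ exp 1 := by
    rw [← rpow_mul (by linarith), mul_inv, mul_assoc, inv_mul_cancel₀ (exp_pos 1).ne', mul_one]
  have hz' : log x / (2 * log (y ^ exp 1)) = s / 2 := by
    rw [← hz, log_rpow (by linarith)]; field_simp
  have hsqrt := sqrt_le_two_rpow_neg_mul_div_log (x := x) (s := s) (by linarith) (by nlinarith)
    (by nlinarith)
  set S := ∑ p ∈ primesBetween y (y ^ exp 1), (p : ℝ)⁻¹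
  have hS : S ≤ 8 := sum_inv_primesBetween_rpow_exp_one_le hy0 hy16
  have hlog4 : log 4 ≤ 2 := by
    rw [show (4 : ℝ) = 2 ^ 2 by norm_num, log_pow]; push_cast; linarith [log_two_lt_d9]
  rw [hz]
  calc (#(bandNumbers x y (y ^ exp 1)) : ℝ)
      ≤ √x + log 4 * x / log y * 5 ^ (1 - log x / (2 * log (y ^ exp 1))) * exp (10 * S) :=
        card_bandNumbers_le hx.le hy10 (one_lt_rpow (by linarith) (exp_pos 1))
    _ ≤ 2 ^ (-s) * x / log x +
          log 4 * exp 1 * 5 * (s * 5 ^ (-(s / 2))) * exp 80 * (x / log x) := by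
        rw [hz', hy, sub_eq_add_neg, rpow_add (by norm_num), rpow_one]
        refine add_le_add hsqrt ?_
        calc log 4 * x / (log x / (s * exp 1)) * (5 * 5 ^ (-(s / 2))) * exp (10 * S)
            = log 4 * exp 1 * 5 * (s * 5 ^ (-(s / 2))) * exp (10 * S) * (x / log x) := by
              rw [div_div_eq_mul_div]; ring
          _ ≤ _ := by gcongr; linarith
    _ ≤ 2 ^ (-s) * x / log x + 2 * 3 * 5 * (10 * 2 ^ (-s)) * exp 80 * (x / log x) := by
        gcongr _ + ?_ * ?_ * _ * ?_ * _ * _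
        · linarith [exp_one_lt_d9]
        · exact mul_five_rpow_neg_half_le (by linarith)
    _ = (1 + 300 * exp 80) * 2 ^ (-s) * x / log x := by ring

/-- **Number Theory Result 1, second part.** For any large `x` and any
integer `0 ≤ k ≤ log log x − 5`, the number of integers `d ≤ x` all of whose
prime factors lie in `[x^{e^{−(k+1)}}, x^{e^{−k}}]` is at most
`C · 2^{−e^k} · x / log x` for an absolute constant `C`. -/
theorem count_integers_with_prime_factors_in_band :
    ∃ C : ℝ, 0 < C ∧ ∃ x₀ : ℝ, ∀ x : ℝ, x₀ ≤ x →
      ∀ k : ℕ, (k : ℝ) ≤ Real.log (Real.log x) - 5 →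
      (((Finset.Icc 1 ⌊x⌋₊).filter
          (fun d : ℕ => ∀ p : ℕ, p.Prime → p ∣ d →
            x ^ (Real.exp (-((k : ℝ) + 1))) ≤ (p : ℝ) ∧
            (p : ℝ) ≤ x ^ (Real.exp (-(k : ℝ))))).card : ℝ)
        ≤ C * (2 : ℝ) ^ (-(Real.exp (k : ℝ))) * x / Real.log x := by
  refine ⟨1 + 300 * exp 80, by positivity, 2, fun x hx k hk => ?_⟩
  have hsx : exp 5 * exp k ≤ log x := by
    rw [← exp_add]; exact (le_log_iff_exp_le (log_pos (by linarith))).mp (by linarith)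
  rw [exp_neg, exp_neg, exp_add]
  exact card_bandNumbers_rpow_inv_le (by linarith) (one_le_exp k.cast_nonneg) hsx
end

section
/- Let f be a Steinhaus random multiplicative function. For any reals 400 ≤ x ≤ y and any σ ≥ −1/log y, E ∏_{x < p ≤ y} |1 − f(p)/p^{1/2+σ}|^{−2} = exp{ ∑_{x < p ≤ y} 1/p^{1+2σ} + O(1/(√x log x)) }. The same estimate holds with the exponent −2 replaced by 2. -/
open MeasureTheory ProbabilityTheory Complex

open scoped Real ComplexConjugate

/-!
If `ζ` is uniform on the unit circle and `‖z‖ < 1`, then `E ‖1 - ζ z‖⁻² = (1 - ‖z‖²)⁻¹` (Poisson's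
formula for the constant function `1`) and `E ‖1 - ζ z‖² = 1 + ‖z‖²` (Parseval for `1 - X z`).
By independence the expected Euler product is the product of these factors with
`‖z‖² = t_p = p^{-(1+2σ)}`. Since `p ≤ y` and `σ ≥ -1/log y`, `t_p ≤ e²/p`, so
`log (1 ∓ t_p)^{∓1} = t_p + O(t_p²)` and the errors add up to `O(∑_{p > x} p⁻²) = O(1/x)`.
-/

lemma ProbabilityTheory.iIndepFun.integral_finset_prod_comp {Ω ι β E : Type*} [MeasurableSpace Ω]
    [MeasurableSpace β] {μ : Measure Ω} {X : ι → Ω → β}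
    [RCLike E] (hX : iIndepFun X μ) (mX : ∀ i, Measurable (X i)) (s : Finset ι)
    {g : ι → β → E} (hg : ∀ i, Measurable (g i)) :
    ∫ ω, ∏ i ∈ s, g i (X i ω) ∂μ = ∏ i ∈ s, ∫ ω, g i (X i ω) ∂μ := by
  have hs := (hX.precomp (g := fun i : {i // i ∈ s} ↦ i.1) Subtype.val_injective)
    |>.integral_fun_prod_comp (f := fun i : s ↦ g i) (fun i ↦ (mX i).aemeasurable)
      (fun i ↦ (hg i).aestronglyMeasurable)
  calc ∫ ω, ∏ i ∈ s, g i (X i ω) ∂μ = ∫ ω, ∏ i : s, g i (X i ω) ∂μ := by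
        congr 1 with ω; exact (Finset.prod_coe_sort s fun i ↦ g i (X i ω)).symm
    _ = ∏ i : s, ∫ ω, g i (X i ω) ∂μ := hs
    _ = ∏ i ∈ s, ∫ ω, g i (X i ω) ∂μ := Finset.prod_coe_sort s fun i ↦ ∫ ω, g i (X i ω) ∂μ

lemma integral_finset_prod_comp_eq_prod_integral {Ω ι β E : Type*} [MeasurableSpace Ω]
    [MeasurableSpace β] {μ : Measure Ω} {ν : Measure β} {X : ι → Ω → β} [RCLike E]
    (hX : iIndepFun X μ) (mX : ∀ i, Measurable (X i)) {s : Finset ι}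
    (hXs : ∀ i ∈ s, μ.map (X i) = ν) {g : ι → β → E} (hg : ∀ i, Measurable (g i)) :
    ∫ ω, ∏ i ∈ s, g i (X i ω) ∂μ = ∏ i ∈ s, ∫ u, g i u ∂ν := by
  rw [hX.integral_finset_prod_comp mX s hg]
  refine Finset.prod_congr rfl fun i hi ↦ ?_
  rw [← hXs i hi, integral_map (mX i).aemeasurable (hg i).aestronglyMeasurable]

lemma setIntegral_Icc_comp_cexp_eq_circleAverage {E : Type*} [NormedAddCommGroup E]
    [NormedSpace ℝ E] (g : ℂ → E) :
    ∫ u in Set.Icc (0 : ℝ) 1, g (cexp (2 * π * I * u)) = Real.circleAverage g 0 1 := by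
  have h := intervalIntegral.integral_comp_mul_left (fun θ ↦ g (circleMap 0 1 θ))
    (a := 0) (b := 1) (by positivity : (2 * π) ≠ 0)
  simp only [mul_zero, mul_one, circleMap_zero, ofReal_one, one_mul] at h
  rw [integral_Icc_eq_integral_Ioc, ← intervalIntegral.integral_of_le zero_le_one,
    Real.circleAverage_def]
  simp only [circleMap_zero, ofReal_one, one_mul]
  rw [← h]
  congr 1 with u
  push_cast
  ring_nf

lemma integral_finset_prod_comp_cexp_mul_eq_prod_circleAverage {Ω ι : Type*}
    [MeasurableSpace Ω] {μ : Measure Ω} {θ : ι → Ω → ℝ} (hθ : iIndepFun θ μ)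
    (mθ : ∀ i, Measurable (θ i)) {s : Finset ι}
    (hunif : ∀ i ∈ s, μ.map (θ i) = volume.restrict (Set.Icc (0 : ℝ) 1)) (z : ι → ℂ)
    {g : ℂ → ℝ} (hg : Measurable g) :
    ∫ ω, ∏ i ∈ s, g (cexp (2 * π * I * θ i ω) * z i) ∂μ
      = ∏ i ∈ s, Real.circleAverage (fun ζ ↦ g (ζ * z i)) 0 1 := by
  rw [integral_finset_prod_comp_eq_prod_integral hθ mθ hunif
    (g := fun i u ↦ g (cexp (2 * π * I * u) * z i)) (by fun_prop)]
  exact Finset.prod_congr rfl fun i _ ↦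
    setIntegral_Icc_comp_cexp_eq_circleAverage fun ζ ↦ g (ζ * z i)

lemma circleAverage_inv_norm_sub_sq {w : ℂ} (hw : ‖w‖ < 1) :
    Real.circleAverage (fun ζ ↦ (‖ζ - w‖ ^ 2)⁻¹) 0 1 = (1 - ‖w‖ ^ 2)⁻¹ := by
  have hw' : w ∈ Metric.ball (0 : ℂ) 1 := by simpa using hw
  have h := (diffContOnCl_const (c := (1 : ℂ))).circleAverage_poissonKernel_smul' hw'
  have hint : CircleIntegrable (fun ζ ↦ (‖ζ - w‖ ^ 2)⁻¹) 0 1 := by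
    refine ContinuousOn.circleIntegrable zero_le_one ?_
    refine ContinuousOn.inv₀ (by fun_prop) fun ζ hζ ↦ ?_
    have hζw : ζ ≠ w := by rintro rfl; simp_all
    exact pow_ne_zero 2 (norm_ne_zero_iff.mpr (sub_ne_zero.mpr hζw))
  have hsphere : Set.EqOn
      (fun ζ ↦ ((‖ζ - 0‖ ^ 2 - ‖w - 0‖ ^ 2) / ‖(ζ - 0) - (w - 0)‖ ^ 2) • (1 : ℂ))
      (ofRealCLM ∘ ((1 - ‖w‖ ^ 2) • fun ζ ↦ (‖ζ - w‖ ^ 2)⁻¹)) (Metric.sphere 0 |1|) := by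
    intro ζ hζ
    simp_all [div_eq_mul_inv]
  rw [Real.circleAverage_congr_sphere hsphere, ofRealCLM.circleAverage_comp_comm hint.const_smul,
    Real.circleAverage_smul, ofRealCLM_apply, ofReal_eq_one, smul_eq_mul] at h
  exact eq_inv_of_mul_eq_one_right h

lemma norm_one_sub_mul_eq_norm_sub_conj {ζ : ℂ} (hζ : ‖ζ‖ = 1) (z : ℂ) :
    ‖1 - ζ * z‖ = ‖ζ - conj z‖ := by
  rw [← RCLike.norm_conj (ζ - conj z), map_sub, conj_conj, ← one_mul ‖conj ζ - z‖, ← hζ,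
    ← norm_mul, mul_sub, mul_conj, normSq_eq_norm_sq, hζ]
  norm_num

lemma circleAverage_inv_norm_one_sub_mul_sq {z : ℂ} (hz : ‖z‖ < 1) :
    Real.circleAverage (fun ζ ↦ (‖1 - ζ * z‖ ^ 2)⁻¹) 0 1 = (1 - ‖z‖ ^ 2)⁻¹ := by
  rw [Real.circleAverage_congr_sphere (f₂ := fun ζ ↦ (‖ζ - conj z‖ ^ 2)⁻¹) fun ζ hζ ↦ by
      rw [norm_one_sub_mul_eq_norm_sub_conj (by simpa using hζ)],
    circleAverage_inv_norm_sub_sq (by rwa [RCLike.norm_conj]), RCLike.norm_conj]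

lemma circleAverage_norm_one_sub_mul_sq (z : ℂ) :
    Real.circleAverage (fun ζ ↦ ‖1 - ζ * z‖ ^ 2) 0 1 = 1 + ‖z‖ ^ 2 := by
  open Polynomial in
  have h := sum_sq_norm_coeff_eq_circleAverage (1 - X * C z)
  simp only [eval_sub, eval_one, eval_mul, eval_C, eval_X] at h
  rw [← h, Finset.sum_subset (supp_subset_range (m := 2) ?_)]
  · simp [Finset.sum_range_succ, coeff_one]
  · intro i _ hi; rw [notMem_support_iff.mp hi, norm_zero, zero_pow two_ne_zero]
  · exact Nat.lt_succ_of_le (by compute_degree!)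

lemma abs_log_one_add_sub_self_le {x : ℝ} (hx : |x| ≤ 1 / 2) :
    |Real.log (1 + x) - x| ≤ 2 * x ^ 2 := by
  have h := Real.abs_log_sub_add_sum_range_le (x := -x) (by rw [abs_neg]; linarith) 1
  rw [abs_neg, sub_neg_eq_add, add_comm 1 x] at h
  simp only [Finset.sum_range_one, zero_add, pow_one, Nat.cast_zero, div_one] at h
  calc |Real.log (1 + x) - x| = |-x + Real.log (x + 1)| := by ring_nf
    _ ≤ |x| ^ 2 / (1 - |x|) := h
    _ ≤ 2 * x ^ 2 := by
      rw [div_le_iff₀ (by linarith), sq_abs]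
      nlinarith [sq_nonneg x]

lemma exists_prod_eq_exp_sum_add {ι : Type*} {s : Finset ι} {a t b : ι → ℝ}
    (ha : ∀ i ∈ s, 0 < a i) (h : ∀ i ∈ s, |Real.log (a i) - t i| ≤ b i) :
    ∃ E, |E| ≤ ∑ i ∈ s, b i ∧ ∏ i ∈ s, a i = Real.exp (∑ i ∈ s, t i + E) := by
  refine ⟨∑ i ∈ s, (Real.log (a i) - t i),
    (Finset.abs_sum_le_sum_abs _ _).trans (Finset.sum_le_sum h), ?_⟩
  rw [← Finset.sum_add_distrib, Real.exp_sum]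
  exact Finset.prod_congr rfl fun i hi ↦ by rw [add_sub_cancel, Real.exp_log (ha i hi)]

lemma exists_prod_one_add_eq_exp_sum_add {ι : Type*} {s : Finset ι} {t : ι → ℝ}
    (ht : ∀ i ∈ s, |t i| ≤ 1 / 2) :
    ∃ E, |E| ≤ ∑ i ∈ s, 2 * t i ^ 2 ∧ ∏ i ∈ s, (1 + t i) = Real.exp (∑ i ∈ s, t i + E) :=
  exists_prod_eq_exp_sum_add (fun i hi ↦ by linarith [neg_abs_le (t i), ht i hi])
    fun i hi ↦ abs_log_one_add_sub_self_le (ht i hi)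

lemma exists_prod_inv_one_sub_eq_exp_sum_add {ι : Type*} {s : Finset ι} {t : ι → ℝ}
    (ht : ∀ i ∈ s, |t i| ≤ 1 / 2) :
    ∃ E, |E| ≤ ∑ i ∈ s, 2 * t i ^ 2 ∧ ∏ i ∈ s, (1 - t i)⁻¹ = Real.exp (∑ i ∈ s, t i + E) := by
  refine exists_prod_eq_exp_sum_add
    (fun i hi ↦ inv_pos.mpr (by linarith [le_abs_self (t i), ht i hi])) fun i hi ↦ ?_
  have h := abs_log_one_add_sub_self_le (x := -t i) (by rw [abs_neg]; exact ht i hi)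
  have heq : -Real.log (1 - t i) - t i = -(Real.log (1 + -t i) - -t i) := by
    rw [← sub_eq_add_neg]; ring
  rwa [Real.log_inv, heq, abs_neg, ← neg_sq]

lemma one_div_rpow_one_add_two_mul_le {p y σ : ℝ} (hp : 1 ≤ p) (hpy : p ≤ y)
    (hσ : -1 / Real.log y ≤ σ) : 1 / p ^ (1 + 2 * σ) ≤ Real.exp 2 / p := by
  have hp0 : 0 < p := by linarith
  have hlogp : 0 ≤ Real.log p := Real.log_nonneg hp
  have hexp : -(2 * σ) * Real.log p ≤ 2 := by
    rcases le_or_gt 0 σ with hσ0 | hσ0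
    · nlinarith
    · have hlogy : 0 < Real.log y := by
        by_contra! h
        have : (0 : ℝ) ≤ -1 / Real.log y := div_nonneg_of_nonpos (by norm_num) h
        linarith
      have hlog : Real.log p ≤ Real.log y := Real.log_le_log hp0 hpy
      rw [div_le_iff₀ hlogy] at hσ
      nlinarith
  calc 1 / p ^ (1 + 2 * σ) = p ^ (-(2 * σ)) / p := by
        rw [Real.rpow_add hp0, Real.rpow_one, Real.rpow_neg hp0.le]; field_simp
    _ ≤ Real.exp 2 / p := by
        gcongr
        rw [Real.rpow_def_of_pos hp0, mul_comm]
        exact Real.exp_le_exp.mpr hexp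

lemma one_div_rpow_one_add_two_mul_le_half {p y σ : ℝ} (hp : 16 ≤ p) (hpy : p ≤ y)
    (hσ : -1 / Real.log y ≤ σ) : 1 / p ^ (1 + 2 * σ) ≤ 1 / 2 := by
  have he : Real.exp 2 < 8 := by
    have := Real.exp_one_lt_d9
    rw [show (2 : ℝ) = 1 + 1 by norm_num, Real.exp_add]
    nlinarith [Real.exp_pos 1]
  calc 1 / p ^ (1 + 2 * σ) ≤ Real.exp 2 / p := one_div_rpow_one_add_two_mul_le (by linarith) hpy hσ
    _ ≤ 1 / 2 := by rw [div_le_iff₀ (by linarith)]; linarith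

lemma sum_inv_sq_le_two_div {x : ℝ} (hx : 0 < x) {s : Finset ℕ} (hs : ∀ n ∈ s, x < n) :
    ∑ n ∈ s, ((n : ℝ) ^ 2)⁻¹ ≤ 2 / x := by
  have hsub : s ⊆ Finset.Ioo ⌊x⌋₊ (s.sup id + 1) := fun n hn ↦ Finset.mem_Ioo.mpr
    ⟨Nat.floor_lt hx.le |>.mpr (hs n hn), Nat.lt_succ_of_le (Finset.le_sup (f := id) hn)⟩
  calc ∑ n ∈ s, ((n : ℝ) ^ 2)⁻¹ ≤ ∑ n ∈ Finset.Ioo ⌊x⌋₊ (s.sup id + 1), ((n : ℝ) ^ 2)⁻¹ :=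
        Finset.sum_le_sum_of_subset_of_nonneg hsub fun _ _ _ ↦ by positivity
    _ ≤ 2 / (⌊x⌋₊ + 1) := sum_Ioo_inv_sq_le _ _
    _ ≤ 2 / x := by gcongr; exact (Nat.lt_floor_add_one x).le

lemma sqrt_mul_log_le {x : ℝ} (hx : 0 ≤ x) : √x * Real.log x ≤ 2 * x := by
  have h := Real.log_le_rpow_div hx (by norm_num : (0 : ℝ) < 1 / 2)
  rw [← Real.sqrt_eq_rpow] at h
  have := Real.mul_self_sqrt hx
  nlinarith [Real.sqrt_nonneg x]

lemma sum_two_mul_sq_one_div_rpow_le {s : Finset ℕ} {x y σ : ℝ} (hx : 1 < x)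
    (hs : ∀ p ∈ s, x < p ∧ (p : ℝ) ≤ y) (hσ : -1 / Real.log y ≤ σ) :
    ∑ p ∈ s, 2 * (1 / (p : ℝ) ^ (1 + 2 * σ)) ^ 2 ≤ 8 * Real.exp 4 / (√x * Real.log x) := by
  have hterm : ∀ p ∈ s, 2 * (1 / (p : ℝ) ^ (1 + 2 * σ)) ^ 2 ≤ 2 * Real.exp 4 * ((p : ℝ) ^ 2)⁻¹ := by
    intro p hp
    have hp1 : 1 ≤ (p : ℝ) := by linarith [(hs p hp).1]
    have h := one_div_rpow_one_add_two_mul_le hp1 (hs p hp).2 hσ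
    calc 2 * (1 / (p : ℝ) ^ (1 + 2 * σ)) ^ 2 ≤ 2 * (Real.exp 2 / p) ^ 2 := by gcongr
      _ = 2 * Real.exp 4 * ((p : ℝ) ^ 2)⁻¹ := by
        rw [div_pow, ← Real.exp_nat_mul]; norm_num; ring
  have hlog : 0 < Real.log x := Real.log_pos hx
  calc ∑ p ∈ s, 2 * (1 / (p : ℝ) ^ (1 + 2 * σ)) ^ 2
      ≤ 2 * Real.exp 4 * ∑ p ∈ s, ((p : ℝ) ^ 2)⁻¹ := by
        rw [Finset.mul_sum]; exact Finset.sum_le_sum hterm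
    _ ≤ 2 * Real.exp 4 * (2 / x) := by
        gcongr; exact sum_inv_sq_le_two_div (by linarith) fun p hp ↦ (hs p hp).1
    _ ≤ 8 * Real.exp 4 / (√x * Real.log x) := by
        rw [le_div_iff₀ (by positivity)]
        have := sqrt_mul_log_le (x := x) (by linarith)
        calc 2 * Real.exp 4 * (2 / x) * (√x * Real.log x) ≤ 2 * Real.exp 4 * (2 / x) * (2 * x) := by
              gcongr
          _ = 8 * Real.exp 4 := by field_simp; ring

lemma norm_inv_natCast_cpow_sq {n : ℕ} (hn : 0 < n) (a : ℝ) :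
    ‖((n : ℂ) ^ (a : ℂ))⁻¹‖ ^ 2 = 1 / (n : ℝ) ^ (2 * a) := by
  rw [norm_inv, ← ofReal_natCast, norm_cpow_eq_rpow_re_of_pos (by positivity), ofReal_re,
    inv_pow, ← Real.rpow_natCast, ← Real.rpow_mul (by positivity), one_div, mul_comm]
  norm_num

/-- **Second moment of a Steinhaus Euler product.** For any `400 ≤ x ≤ y` and
`σ ≥ −1/log y`, `E ∏_{x < p ≤ y} |1 − f(p)/p^{1/2+σ}|^{∓2}
 = exp{∑_{x < p ≤ y} 1/p^{1+2σ} + O(1/(√x log x))}`, for both the exponent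
`−2` and the exponent `2`. -/
theorem steinhaus_euler_product_second_moment :
    ∃ C : ℝ, 0 < C ∧
      ∀ (Ω : Type) (_ : MeasurableSpace Ω) (μ : Measure Ω), IsProbabilityMeasure μ →
      ∀ (f : ℕ → Ω → ℂ) (θ : ℕ → Ω → ℝ),
      (∀ p, Measurable (θ p)) →
      iIndepFun θ μ →
      (∀ p : ℕ, p.Prime → μ.map (θ p) = volume.restrict (Set.Icc (0 : ℝ) 1)) →
      (∀ p : ℕ, p.Prime → ∀ ω,
        f p ω = Complex.exp (2 * Real.pi * Complex.I * θ p ω)) →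
      ∀ x y σ : ℝ, 400 ≤ x → x ≤ y → -1 / Real.log y ≤ σ →
      (∃ E : ℝ, |E| ≤ C / (Real.sqrt x * Real.log x) ∧
        ∫ ω, ∏ p ∈ (Finset.Icc 1 ⌊y⌋₊).filter
              (fun p : ℕ => p.Prime ∧ x < (p : ℝ)),
            ‖1 - f p ω / (p : ℂ) ^ (((1 / 2 + σ : ℝ) : ℂ))‖ ^ (-2 : ℝ) ∂μ
          = Real.exp
              ((∑ p ∈ (Finset.Icc 1 ⌊y⌋₊).filter
                  (fun p : ℕ => p.Prime ∧ x < (p : ℝ)),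
                1 / ((p : ℝ) ^ (1 + 2 * σ))) + E)) ∧
      (∃ E : ℝ, |E| ≤ C / (Real.sqrt x * Real.log x) ∧
        ∫ ω, ∏ p ∈ (Finset.Icc 1 ⌊y⌋₊).filter
              (fun p : ℕ => p.Prime ∧ x < (p : ℝ)),
            ‖1 - f p ω / (p : ℂ) ^ (((1 / 2 + σ : ℝ) : ℂ))‖ ^ (2 : ℝ) ∂μ
          = Real.exp
              ((∑ p ∈ (Finset.Icc 1 ⌊y⌋₊).filter
                  (fun p : ℕ => p.Prime ∧ x < (p : ℝ)),
                1 / ((p : ℝ) ^ (1 + 2 * σ))) + E)) := by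
  refine ⟨8 * Real.exp 4, by positivity, ?_⟩
  intro Ω _ μ _ f θ hθ hind hunif hf x y σ hx _ hσ
  set S := (Finset.Icc 1 ⌊y⌋₊).filter (fun p : ℕ => p.Prime ∧ x < (p : ℝ))
  set z : ℕ → ℂ := fun p ↦ ((p : ℂ) ^ (((1 / 2 + σ : ℝ) : ℂ)))⁻¹
  have hS : ∀ p ∈ S, p.Prime ∧ x < p ∧ (p : ℝ) ≤ y := fun p hp ↦ by
    simp only [S, Finset.mem_filter, Finset.mem_Icc] at hp
    exact ⟨hp.2.1, hp.2.2, (Nat.cast_le.mpr hp.1.2).trans (Nat.floor_le (by linarith))⟩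
  have hz : ∀ p ∈ S, ‖z p‖ ^ 2 = 1 / (p : ℝ) ^ (1 + 2 * σ) := fun p hp ↦ by
    rw [norm_inv_natCast_cpow_sq (hS p hp).1.pos]; congr 2; ring
  have hsmall : ∀ p ∈ S, |1 / (p : ℝ) ^ (1 + 2 * σ)| ≤ 1 / 2 := fun p hp ↦ by
    rw [abs_of_nonneg (by positivity)]
    exact one_div_rpow_one_add_two_mul_le_half (by linarith [(hS p hp).2.1]) (hS p hp).2.2 hσ
  have hz1 : ∀ p ∈ S, ‖z p‖ < 1 := fun p hp ↦ by
    nlinarith [hz p hp ▸ (le_abs_self _).trans (hsmall p hp), norm_nonneg (z p)]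
  have herr := sum_two_mul_sq_one_div_rpow_le (by linarith) (fun p hp ↦ (hS p hp).2) hσ
  have hmoment (g : ℂ → ℝ) (hg : Measurable g) :
      ∫ ω, ∏ p ∈ S, g (f p ω / (p : ℂ) ^ (((1 / 2 + σ : ℝ) : ℂ))) ∂μ
        = ∏ p ∈ S, Real.circleAverage (fun ζ ↦ g (ζ * z p)) 0 1 := by
    rw [← integral_finset_prod_comp_cexp_mul_eq_prod_circleAverage hind hθ
      (fun p hp ↦ hunif p (hS p hp).1) z hg]
    refine integral_congr_ae (ae_of_all _ fun ω ↦ Finset.prod_congr rfl fun p hp ↦ ?_)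
    rw [hf p (hS p hp).1, div_eq_mul_inv]
  constructor
  · obtain ⟨E, hE, hprod⟩ := exists_prod_inv_one_sub_eq_exp_sum_add hsmall
    refine ⟨E, hE.trans herr, ?_⟩
    rw [hmoment (fun w ↦ ‖1 - w‖ ^ (-2 : ℝ)) (by fun_prop), ← hprod]
    refine Finset.prod_congr rfl fun p hp ↦ ?_
    simp only [Real.rpow_neg (norm_nonneg _), Real.rpow_two]
    rw [circleAverage_inv_norm_one_sub_mul_sq (hz1 p hp), hz p hp]
  · obtain ⟨E, hE, hprod⟩ := exists_prod_one_add_eq_exp_sum_add hsmall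
    refine ⟨E, hE.trans herr, ?_⟩
    rw [hmoment (fun w ↦ ‖1 - w‖ ^ (2 : ℝ)) (by fun_prop), ← hprod]
    refine Finset.prod_congr rfl fun p hp ↦ ?_
    simp only [Real.rpow_two]
    rw [circleAverage_norm_one_sub_mul_sq, hz p hp]
end

section
/- Let f be a Steinhaus random multiplicative function, let x be large, and let P(n) denote the largest prime factor of n. Then for every 2/3 ≤ q ≤ 1, E|∑_{n ≤ x, P(n) > √x} f(n)|^{2q} ≤ 2·E|∑_{n ≤ x} f(n)|^{2q}. -/
open MeasureTheory ProbabilityTheory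
open scoped Classical

noncomputable def rsmEe (r : ℝ) : ℂ := Complex.exp (2 * Real.pi * Complex.I * (r : ℂ))

lemma rsmEe_add (a b : ℝ) : rsmEe (a + b) = rsmEe a * rsmEe b := by
  rw [rsmEe, rsmEe, rsmEe, ← Complex.exp_add]
  push_cast
  ring_nf

lemma rsmEe_int (k : ℤ) : rsmEe (k : ℝ) = 1 := by
  rw [rsmEe]
  push_cast
  rw [show 2 * (Real.pi : ℂ) * Complex.I * (k : ℂ) = (k : ℂ) * (2 * Real.pi * Complex.I) by ring]
  exact Complex.exp_int_mul_two_pi_mul_I k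

lemma rsmEe_fract (r : ℝ) : rsmEe (Int.fract r) = rsmEe r := by
  have h : Int.fract r = r + -((⌊r⌋ : ℤ) : ℝ) := by
    rw [← Int.self_sub_floor]; push_cast; ring
  rw [h, rsmEe_add, ← Int.cast_neg, rsmEe_int, mul_one]

lemma rsmEe_half : rsmEe (2⁻¹ : ℝ) = -1 := by
  rw [rsmEe]
  push_cast
  rw [show 2 * (Real.pi : ℂ) * Complex.I * (2⁻¹ : ℂ) = Real.pi * Complex.I by ring]
  exact Complex.exp_pi_mul_I

lemma rsmEe_norm (r : ℝ) : ‖rsmEe r‖ = 1 := by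
  rw [rsmEe, Complex.norm_exp]
  simp

lemma rsmEe_measurable : Measurable rsmEe :=
  (Complex.continuous_exp.comp (continuous_const.mul Complex.continuous_ofReal)).measurable

/-- the shift-by-1/2-mod-1 map preserves the uniform measure on [0,1]. -/
lemma rsm_shift_measurable : Measurable (fun t : ℝ => Int.fract (t + 2⁻¹)) :=
  measurable_fract.comp (measurable_add_const _)

lemma rsm_measurePreserving_shift :
    MeasurePreserving (fun t : ℝ => Int.fract (t + 2⁻¹))
      (volume.restrict (Set.Icc (0:ℝ) 1)) (volume.restrict (Set.Icc (0:ℝ) 1)) := by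
  constructor
  · exact rsm_shift_measurable
  · have hIcc : volume.restrict (Set.Icc (0:ℝ) 1) = volume.restrict (Set.Ico (0:ℝ) 1) :=
      (Measure.restrict_congr_set (Ico_ae_eq_Icc)).symm
    have hsplit : volume.restrict (Set.Ico (0:ℝ) 1)
        = volume.restrict (Set.Ico (0:ℝ) 2⁻¹) + volume.restrict (Set.Ico (2⁻¹:ℝ) 1) := by
      rw [← Measure.restrict_union (Set.Ico_disjoint_Ico.mpr (by norm_num)) measurableSet_Ico,
        Set.Ico_union_Ico_eq_Ico (by norm_num) (by norm_num)]
    rw [hIcc, hsplit, Measure.map_add _ _ rsm_shift_measurable]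
    have h1 : (volume.restrict (Set.Ico (0:ℝ) 2⁻¹)).map (fun t => Int.fract (t + 2⁻¹))
        = volume.restrict (Set.Ico (2⁻¹:ℝ) 1) := by
      have he : (fun t : ℝ => Int.fract (t + 2⁻¹)) =ᵐ[volume.restrict (Set.Ico (0:ℝ) 2⁻¹)]
          (fun t : ℝ => t + 2⁻¹) := by
        filter_upwards [ae_restrict_mem measurableSet_Ico] with t ht
        exact Int.fract_eq_self.mpr ⟨by linarith [ht.1], by linarith [ht.2]⟩
      rw [Measure.map_congr he]
      have := Measure.restrict_map (μ := (volume : Measure ℝ)) (measurable_add_const (2⁻¹ : ℝ))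
        (measurableSet_Ico (a := (2⁻¹:ℝ)) (b := 1))
      rw [(measurePreserving_add_right volume (2⁻¹:ℝ)).map_eq,
        Set.preimage_add_const_Ico] at this
      norm_num at this
      convert this.symm using 2 <;> norm_num <;> rfl
    have h2 : (volume.restrict (Set.Ico (2⁻¹:ℝ) 1)).map (fun t => Int.fract (t + 2⁻¹))
        = volume.restrict (Set.Ico (0:ℝ) 2⁻¹) := by
      have he : (fun t : ℝ => Int.fract (t + 2⁻¹)) =ᵐ[volume.restrict (Set.Ico (2⁻¹:ℝ) 1)]
          (fun t : ℝ => t + -2⁻¹) := by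
        filter_upwards [ae_restrict_mem measurableSet_Ico] with t ht
        have : t + 2⁻¹ = (t + -2⁻¹) + ((1 : ℤ) : ℝ) := by push_cast; ring
        rw [this, Int.fract_add_intCast]
        exact Int.fract_eq_self.mpr ⟨by linarith [ht.1], by linarith [ht.2]⟩
      rw [Measure.map_congr he]
      have := Measure.restrict_map (μ := (volume : Measure ℝ)) (measurable_add_const (-2⁻¹ : ℝ))
        (measurableSet_Ico (a := (0:ℝ)) (b := 2⁻¹))
      rw [(measurePreserving_add_right volume (-2⁻¹:ℝ)).map_eq,
        Set.preimage_add_const_Ico] at this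
      norm_num at this
      convert this.symm using 2 <;> norm_num <;> rfl
    rw [h1, h2, add_comm, ← hsplit]
lemma rsm_half_rpow {a b p : ℝ} (ha : 0 ≤ a) (hb : 0 ≤ b) (hp : 1 ≤ p) :
    ((a + b) / 2) ^ p ≤ (a ^ p + b ^ p) / 2 := by
  have := NNReal.rpow_arith_mean_le_arith_mean2_rpow (1/2) (1/2) a.toNNReal b.toNNReal
    (by rw [← NNReal.coe_inj]; push_cast; norm_num) hp
  have h := (NNReal.coe_le_coe).mpr this
  push_cast at h
  rw [Real.coe_toNNReal a ha, Real.coe_toNNReal b hb] at h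
  calc ((a + b) / 2) ^ p = (1/2 * a + 1/2 * b) ^ p := by ring_nf
    _ ≤ 1/2 * a ^ p + 1/2 * b ^ p := h
    _ = (a ^ p + b ^ p) / 2 := by ring

lemma rsm_joint_law {Ω : Type*} [MeasurableSpace Ω] (μ : Measure Ω) [IsProbabilityMeasure μ]
    (θ : ℕ → Ω → ℝ) (hθmeas : ∀ p, Measurable (θ p))
    (hθindep : iIndepFun θ μ) (K : Finset ℕ) :
    μ.map (fun ω (p : K) => θ p ω) = Measure.pi (fun p : K => μ.map (θ (p : ℕ))) := by
  haveI : ∀ p : K, IsProbabilityMeasure (μ.map (θ (p : ℕ))) :=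
    fun p => Measure.isProbabilityMeasure_map (hθmeas _).aemeasurable
  have hΦ : Measurable (fun ω (p : K) => θ p ω) :=
    measurable_pi_lambda _ (fun p => hθmeas _)
  refine (Measure.pi_eq fun s hs => ?_).symm
  rw [Measure.map_apply hΦ (MeasurableSet.univ_pi hs)]
  set s' : ℕ → Set ℝ := fun i => if h : i ∈ K then s ⟨i, h⟩ else Set.univ with hs'
  have hset : (fun ω (p : K) => θ p ω) ⁻¹' (Set.univ.pi s) = ⋂ i ∈ K, θ i ⁻¹' s' i := by
    ext ω
    simp only [Set.mem_preimage, Set.mem_pi, Set.mem_univ, forall_true_left, Set.mem_iInter,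
      hs']
    constructor
    · intro h i hi
      simpa [dif_pos hi] using h ⟨i, hi⟩
    · intro h p
      have := h p p.2
      simpa [dif_pos p.2] using this
  rw [hset, hθindep.measure_inter_preimage_eq_mul K
    (fun i hi => by simpa [hs', dif_pos hi] using hs ⟨i, hi⟩)]
  rw [← Finset.prod_coe_sort K (fun i => μ (θ i ⁻¹' s' i))]
  refine Finset.prod_congr rfl ?_
  intro p _
  rw [Measure.map_apply (hθmeas _) (hs p)]
  congr 1
  simp [hs', dif_pos p.2]

set_option maxHeartbeats 1600000 in
/-- **Rough part dominated by the full sum.** Let `f` be a Steinhaus random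
multiplicative function, `x` large, and `P(n)` the largest prime factor of
`n`. Then for every `2/3 ≤ q ≤ 1`,
`E|∑_{n ≤ x, P(n) > √x} f(n)|^{2q} ≤ 2·E|∑_{n ≤ x} f(n)|^{2q}`. -/
theorem rough_sum_moment_le
    {Ω : Type*} [MeasurableSpace Ω] (μ : Measure Ω) [IsProbabilityMeasure μ]
    (f : ℕ → Ω → ℂ) (θ : ℕ → Ω → ℝ)
    (hmeas : ∀ n, Measurable (f n))
    (hone : ∀ ω, f 1 ω = 1)
    (hmul : ∀ m n : ℕ, ∀ ω, f (m * n) ω = f m ω * f n ω)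
    (hθmeas : ∀ p, Measurable (θ p))
    (hθindep : iIndepFun θ μ)
    (hθunif : ∀ p : ℕ, p.Prime → μ.map (θ p) = volume.restrict (Set.Icc (0 : ℝ) 1))
    (hf : ∀ p : ℕ, p.Prime → ∀ ω,
      f p ω = Complex.exp (2 * Real.pi * Complex.I * θ p ω))
    (x : ℝ) (hx : 16 ≤ x) :
    ∀ q : ℝ, 2 / 3 ≤ q → q ≤ 1 →
      ∫ ω, ‖∑ n ∈ (Finset.Icc 1 ⌊x⌋₊).filter
            (fun n : ℕ => ∃ p : ℕ, p.Prime ∧ p ∣ n ∧ Real.sqrt x < (p : ℝ)),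
          f n ω‖ ^ (2 * q) ∂μ
        ≤ 2 * ∫ ω, ‖∑ n ∈ Finset.Icc 1 ⌊x⌋₊, f n ω‖ ^ (2 * q) ∂μ := by
  intro q hq1 hq2
  have h2q : (1:ℝ) ≤ 2 * q := by linarith
  have h2q0 : (0:ℝ) ≤ 2 * q := by linarith
  have hx0 : (0:ℝ) ≤ x := by linarith
  set N := ⌊x⌋₊ with hNdef
  have hNx : (N:ℝ) ≤ x := Nat.floor_le hx0
  have hsq : Real.sqrt x * Real.sqrt x = x := Real.mul_self_sqrt hx0
  have hsq0 : (0:ℝ) ≤ Real.sqrt x := Real.sqrt_nonneg x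
  set K : Finset ℕ := (Finset.range (N+1)).filter Nat.Prime with hK
  have hKprime : ∀ p : K, Nat.Prime (p : ℕ) := fun p => (Finset.mem_filter.mp p.2).2
  have hmemK : ∀ p n : ℕ, p.Prime → p ∣ n → n ∈ Finset.Icc 1 N → p ∈ K := by
    intro p n hp hdvd hn
    rw [Finset.mem_Icc] at hn
    refine Finset.mem_filter.mpr ⟨Finset.mem_range.mpr ?_, hp⟩
    have := Nat.le_of_dvd (by omega) hdvd
    omega
  haveI hunif_prob : IsProbabilityMeasure (volume.restrict (Set.Icc (0:ℝ) 1)) := by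
    constructor
    rw [Measure.restrict_apply_univ, Real.volume_Icc]
    norm_num
  -- the joint law
  set Φ : Ω → (K → ℝ) := fun ω p => θ p ω with hΦdef
  have hΦ : Measurable Φ := measurable_pi_lambda _ fun p => hθmeas _
  set ν : Measure (K → ℝ) :=
    Measure.pi (fun _ : K => volume.restrict (Set.Icc (0:ℝ) 1)) with hνdef
  haveI : IsProbabilityMeasure ν := by rw [hνdef]; infer_instance
  have hmapΦ : μ.map Φ = ν := by
    rw [hΦdef, rsm_joint_law μ θ hθmeas hθindep K, hνdef]
    congr 1
    funext p
    exact hθunif _ (hKprime p)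
  -- the deterministic model of f
  set g : ℕ → (K → ℝ) → ℂ :=
    fun n t => ∏ p ∈ K.attach, rsmEe (t p) ^ (n.factorization (p:ℕ)) with hg
  have hgmeas : ∀ n, Measurable (g n) := fun n =>
    Finset.measurable_prod _ fun p _ =>
      ((rsmEe_measurable.comp (measurable_pi_apply p)).pow_const _)
  have hgnorm : ∀ n t, ‖g n t‖ = 1 := by
    intro n t
    rw [hg]
    simp only
    rw [norm_prod]
    rw [Finset.prod_congr rfl fun p _ => by rw [norm_pow, rsmEe_norm, one_pow]]
    exact Finset.prod_const_one
  have hfg : ∀ n ∈ Finset.Icc 1 N, ∀ ω, f n ω = g n (Φ ω) := by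
    intro n hn ω
    have hn' := Finset.mem_Icc.mp hn
    have hn0 : n ≠ 0 := by omega
    set F : ℕ →* ℂ :=
      { toFun := fun m => f m ω, map_one' := hone ω, map_mul' := fun a b => hmul a b ω } with hF
    have hsub : n.primeFactors ⊆ K := fun p hp =>
      hmemK p n (Nat.prime_of_mem_primeFactors hp) (Nat.dvd_of_mem_primeFactors hp) hn
    calc f n ω = F n := rfl
      _ = F (n.primeFactorsList.prod) := by rw [Nat.prod_primeFactorsList hn0]
      _ = (n.primeFactorsList.map F).prod := map_list_prod F _
      _ = ∏ p ∈ n.primeFactorsList.toFinset, (F p) ^ n.primeFactorsList.count p :=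
          Finset.prod_list_map_count _ _
      _ = ∏ p ∈ n.primeFactors, (f p ω) ^ n.factorization p := by
          rw [Nat.toFinset_factors]
          exact Finset.prod_congr rfl fun p _ => by rw [Nat.primeFactorsList_count_eq]; rfl
      _ = ∏ p ∈ n.primeFactors, (rsmEe (θ p ω)) ^ n.factorization p :=
          Finset.prod_congr rfl fun p hp => by
            rw [hf p (Nat.prime_of_mem_primeFactors hp) ω]; rfl
      _ = ∏ p ∈ K, (rsmEe (θ p ω)) ^ n.factorization p :=
          Finset.prod_subset hsub fun p _ hp => by
            rw [Finsupp.notMem_support_iff.mp (by rwa [Nat.support_factorization]), pow_zero]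
      _ = g n (Φ ω) := by
          rw [hg]
          simp only
          rw [← Finset.prod_attach K (fun p => (rsmEe (θ p ω)) ^ n.factorization p)]
  -- transfer of the two integrals to the model space
  have htransfer : ∀ s : Finset ℕ, s ⊆ Finset.Icc 1 N →
      ∫ ω, ‖∑ n ∈ s, f n ω‖ ^ (2*q) ∂μ = ∫ t, ‖∑ n ∈ s, g n t‖ ^ (2*q) ∂ν := by
    intro s hs
    have hmeas' : Measurable fun t => ‖∑ n ∈ s, g n t‖ ^ (2*q) :=
      (Real.continuous_rpow_const h2q0).measurable.comp
        (Finset.measurable_sum _ fun n _ => hgmeas n).norm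
    calc ∫ ω, ‖∑ n ∈ s, f n ω‖ ^ (2*q) ∂μ
        = ∫ ω, ‖∑ n ∈ s, g n (Φ ω)‖ ^ (2*q) ∂μ := by
          refine integral_congr_ae (Filter.Eventually.of_forall fun ω => ?_)
          have hss := Finset.sum_congr rfl fun n hn => hfg n (hs hn) ω
          simp only [hss]
      _ = ∫ t, ‖∑ n ∈ s, g n t‖ ^ (2*q) ∂(μ.map Φ) :=
          (integral_map hΦ.aemeasurable hmeas'.aestronglyMeasurable).symm
      _ = ∫ t, ‖∑ n ∈ s, g n t‖ ^ (2*q) ∂ν := by rw [hmapΦ]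
  -- the sign-flip transformation
  set w : K → ℂ := fun p => if Real.sqrt x < ((p:ℕ):ℝ) then (-1:ℂ) else 1 with hw
  set σ : K → ℝ → ℝ :=
    fun p => if Real.sqrt x < ((p:ℕ):ℝ) then (fun r => Int.fract (r + 2⁻¹)) else id with hσ
  set T : (K → ℝ) → (K → ℝ) := fun t p => σ p (t p) with hT
  have hTmp : MeasurePreserving T ν ν := by
    rw [hνdef]
    refine measurePreserving_pi _ _ fun p => ?_
    by_cases h : Real.sqrt x < ((p:ℕ):ℝ)
    · simpa [hσ, h] using rsm_measurePreserving_shift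
    · simpa [hσ, h] using MeasurePreserving.id _
  have hEσ : ∀ (p : K) (r : ℝ), rsmEe (σ p r) = w p * rsmEe r := by
    intro p r
    by_cases h : Real.sqrt x < ((p:ℕ):ℝ)
    · simp only [hσ, hw, if_pos h]
      rw [rsmEe_fract, rsmEe_add, rsmEe_half]
      ring
    · simp [hσ, hw, if_neg h]
  set Lg : ℕ → Prop :=
    fun n => ∃ p : ℕ, p.Prime ∧ p ∣ n ∧ Real.sqrt x < (p : ℝ) with hLg
  set c : ℕ → ℂ := fun n => ∏ p ∈ K.attach, w p ^ n.factorization (p:ℕ) with hc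
  have hgT : ∀ n t, g n (T t) = c n * g n t := by
    intro n t
    rw [hg, hc]
    simp only
    rw [← Finset.prod_mul_distrib]
    exact Finset.prod_congr rfl fun p _ => by
      rw [show T t p = σ p (t p) from rfl, hEσ p (t p), mul_pow]
  have hc_smooth : ∀ n, ¬ Lg n → c n = 1 := by
    intro n hnL
    refine Finset.prod_eq_one fun p _ => ?_
    by_cases h : Real.sqrt x < ((p:ℕ):ℝ)
    · have hv : n.factorization (p:ℕ) = 0 := by
        by_contra hv
        exact hnL ⟨p, hKprime p, Nat.dvd_of_factorization_pos hv, h⟩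
      rw [hv, pow_zero]
    · simp [hw, if_neg h]
  have hc_rough : ∀ n ∈ Finset.Icc 1 N, Lg n → c n = -1 := by
    intro n hn hnL
    have hn' := Finset.mem_Icc.mp hn
    have hn0 : n ≠ 0 := by omega
    obtain ⟨p₀, hp₀, hdvd, hlt⟩ := hnL
    have hp₀K : p₀ ∈ K := hmemK p₀ n hp₀ hdvd hn
    have hnx : (n:ℝ) ≤ x := le_trans (Nat.cast_le.mpr hn'.2) hNx
    have hv1 : n.factorization p₀ = 1 := by
      have hge : 1 ≤ n.factorization p₀ := by
        rw [← Nat.Prime.pow_dvd_iff_le_factorization hp₀ hn0]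
        simpa using hdvd
      have hlt2 : ¬ (2 ≤ n.factorization p₀) := by
        intro h2
        have hdvd2 : p₀ ^ 2 ∣ n := (Nat.Prime.pow_dvd_iff_le_factorization hp₀ hn0).mpr h2
        have hle : ((p₀:ℝ)) ^ 2 ≤ (n:ℝ) := by
          have := Nat.le_of_dvd (by omega) hdvd2
          exact_mod_cast this
        nlinarith [hlt, hsq, hsq0, hle, hnx]
      omega
    rw [hc]
    simp only
    rw [Finset.prod_eq_single_of_mem (⟨p₀, hp₀K⟩ : {y // y ∈ K}) (Finset.mem_attach _ _)
      (fun b _ hb => ?_)]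
    · rw [hv1, pow_one, hw]
      simp only
      rw [if_pos hlt]
    · by_cases h : Real.sqrt x < ((b:ℕ):ℝ)
      · have hvb : n.factorization (b:ℕ) = 0 := by
          by_contra hvb
          have hdvdb : (b:ℕ) ∣ n := Nat.dvd_of_factorization_pos hvb
          have hbne : (b:ℕ) ≠ p₀ := fun he => hb (Subtype.ext he)
          have hcop : Nat.Coprime (b:ℕ) p₀ := (Nat.coprime_primes (hKprime b) hp₀).mpr hbne
          have hmuldvd : (b:ℕ) * p₀ ∣ n := hcop.mul_dvd_of_dvd_of_dvd hdvdb hdvd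
          have hle : ((b:ℕ):ℝ) * (p₀:ℝ) ≤ (n:ℝ) := by
            have := Nat.le_of_dvd (by omega) hmuldvd
            exact_mod_cast this
          nlinarith [h, hlt, hsq, hsq0, hle, hnx]
        rw [hvb, pow_zero]
      · simp [hw, if_neg h]
  -- the two model sums
  set Sfun : (K → ℝ) → ℂ := fun t => ∑ n ∈ Finset.Icc 1 N, g n t with hSfun
  set Rfun : (K → ℝ) → ℂ := fun t => ∑ n ∈ (Finset.Icc 1 N).filter Lg, g n t with hRfun
  have hsum2 : ∀ t, Sfun t - Sfun (T t) = 2 * Rfun t := by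
    intro t
    have e1 : Sfun t
        = (∑ n ∈ (Finset.Icc 1 N).filter Lg, g n t)
          + ∑ n ∈ (Finset.Icc 1 N).filter (fun n => ¬ Lg n), g n t :=
      (Finset.sum_filter_add_sum_filter_not _ _ _).symm
    have e2 : Sfun (T t)
        = (∑ n ∈ (Finset.Icc 1 N).filter Lg, (-(g n t)))
          + ∑ n ∈ (Finset.Icc 1 N).filter (fun n => ¬ Lg n), g n t := by
      rw [show Sfun (T t) = ∑ n ∈ Finset.Icc 1 N, g n (T t) from rfl,
        ← Finset.sum_filter_add_sum_filter_not (Finset.Icc 1 N) Lg (fun n => g n (T t))]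
      congr 1
      · refine Finset.sum_congr rfl fun n hn => ?_
        have hmem := Finset.mem_filter.mp hn
        rw [hgT, hc_rough n hmem.1 hmem.2]
        ring
      · refine Finset.sum_congr rfl fun n hn => ?_
        have hmem := Finset.mem_filter.mp hn
        rw [hgT, hc_smooth n hmem.2, one_mul]
    rw [e1, e2, hRfun]
    simp only
    rw [Finset.sum_neg_distrib]
    ring
  -- bounds and integrability
  have hbound : ∀ (s : Finset ℕ), ∀ t : K → ℝ, ‖∑ n ∈ s, g n t‖ ≤ (s.card : ℝ) := by
    intro s t
    refine le_trans (norm_sum_le _ _) ?_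
    rw [Finset.sum_congr rfl fun n _ => hgnorm n t]
    simp
  have hint : ∀ (h : (K → ℝ) → ℂ) (C : ℝ), Measurable h → (∀ t, ‖h t‖ ≤ C) →
      Integrable (fun t => ‖h t‖ ^ (2*q)) ν := by
    intro h C hm hb
    have hC0 : 0 ≤ C := le_trans (norm_nonneg _) (hb (fun _ => 0))
    refine Integrable.mono' (integrable_const (C ^ (2*q)))
      ((Real.continuous_rpow_const h2q0).measurable.comp hm.norm).aestronglyMeasurable
      (Filter.Eventually.of_forall fun t => ?_)
    rw [Real.norm_of_nonneg (Real.rpow_nonneg (norm_nonneg _) _)]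
    exact Real.rpow_le_rpow (norm_nonneg _) (hb t) h2q0
  have hSmeas : Measurable Sfun := Finset.measurable_sum _ fun n _ => hgmeas n
  have hRmeas : Measurable Rfun := Finset.measurable_sum _ fun n _ => hgmeas n
  have hint_S : Integrable (fun t => ‖Sfun t‖ ^ (2*q)) ν :=
    hint Sfun _ hSmeas (fun t => hbound _ t)
  have hint_ST : Integrable (fun t => ‖Sfun (T t)‖ ^ (2*q)) ν :=
    hint (fun t => Sfun (T t)) _ (hSmeas.comp hTmp.measurable) (fun t => hbound _ (T t))
  have hint_R : Integrable (fun t => ‖Rfun t‖ ^ (2*q)) ν :=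
    hint Rfun _ hRmeas (fun t => hbound _ t)
  -- the key inequality
  have hTint : ∫ t, ‖Sfun (T t)‖ ^ (2*q) ∂ν = ∫ t, ‖Sfun t‖ ^ (2*q) ∂ν := by
    have hmeas' : Measurable fun t => ‖Sfun t‖ ^ (2*q) :=
      (Real.continuous_rpow_const h2q0).measurable.comp hSmeas.norm
    calc ∫ t, ‖Sfun (T t)‖ ^ (2*q) ∂ν
        = ∫ y, ‖Sfun y‖ ^ (2*q) ∂(ν.map T) :=
          (integral_map hTmp.measurable.aemeasurable hmeas'.aestronglyMeasurable).symm
      _ = ∫ t, ‖Sfun t‖ ^ (2*q) ∂ν := by rw [hTmp.map_eq]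
  have key : ∫ t, ‖Rfun t‖ ^ (2*q) ∂ν ≤ ∫ t, ‖Sfun t‖ ^ (2*q) ∂ν := by
    have hptwise : ∀ t, ‖Rfun t‖ ^ (2*q)
        ≤ (‖Sfun t‖ ^ (2*q) + ‖Sfun (T t)‖ ^ (2*q)) / 2 := by
      intro t
      have h2R : ‖Rfun t‖ = ‖Sfun t - Sfun (T t)‖ / 2 := by
        rw [hsum2 t, norm_mul]
        simp
      calc ‖Rfun t‖ ^ (2*q) = (‖Sfun t - Sfun (T t)‖ / 2) ^ (2*q) := by rw [h2R]
        _ ≤ ((‖Sfun t‖ + ‖Sfun (T t)‖) / 2) ^ (2*q) := by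
            refine Real.rpow_le_rpow (by positivity) ?_ h2q0
            have := norm_sub_le (Sfun t) (Sfun (T t))
            linarith
        _ ≤ (‖Sfun t‖ ^ (2*q) + ‖Sfun (T t)‖ ^ (2*q)) / 2 :=
            rsm_half_rpow (norm_nonneg _) (norm_nonneg _) h2q
    calc ∫ t, ‖Rfun t‖ ^ (2*q) ∂ν
        ≤ ∫ t, (‖Sfun t‖ ^ (2*q) + ‖Sfun (T t)‖ ^ (2*q)) / 2 ∂ν :=
          integral_mono hint_R ((hint_S.add hint_ST).div_const 2)
            (fun t => hptwise t)
      _ = (∫ t, ‖Sfun t‖ ^ (2*q) ∂ν + ∫ t, ‖Sfun (T t)‖ ^ (2*q) ∂ν) / 2 := by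
          rw [integral_div, integral_add hint_S hint_ST]
      _ = ∫ t, ‖Sfun t‖ ^ (2*q) ∂ν := by rw [hTint]; ring
  -- wrap up
  have hL := htransfer ((Finset.Icc 1 N).filter Lg) (Finset.filter_subset _ _)
  have hR := htransfer (Finset.Icc 1 N) (subset_refl _)
  rw [hL, hR]
  have hnonneg : 0 ≤ ∫ t, ‖Sfun t‖ ^ (2*q) ∂ν :=
    integral_nonneg fun t => Real.rpow_nonneg (norm_nonneg _) _
  calc ∫ t, ‖Rfun t‖ ^ (2*q) ∂ν ≤ ∫ t, ‖Sfun t‖ ^ (2*q) ∂ν := key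
    _ ≤ 2 * ∫ t, ‖Sfun t‖ ^ (2*q) ∂ν := by linarith
end
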